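/- Let q_α = α^(1/2)·γ_α where γ_α = log(G_α) + derived centering such that q_α has the distribution MLG(0, α^(1/2), α, 1/α) in one dimension; then as α → ∞, q_α converges in distribution to a standard normal random variable. Concretely: if G_α ~ Gamma(α, 1/α) and q_α = α^(1/2)·log(G_α), then q_α converges in distribution to N(0, 1) as α → ∞. -/

import Mathlib

open Real MeasureTheory ProbabilityTheory Filter
open scoped NNReal ENNReal

namespace LogGammaAux

lemma cov {α : ℝ} (hα : 0 < α) (g : ℝ → ℝ) :
    ∫ x, g (Real.sqrt α * Real.log x) ∂(gammaMeasure α α)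
      = (α ^ α * rexp (-α) / (Real.Gamma α * Real.sqrt α)) *
        ∫ y, rexp (α * (y / Real.sqrt α) - α * rexp (y / Real.sqrt α) + α) * g y := by
  have hs : (0:ℝ) < Real.sqrt α := Real.sqrt_pos.mpr hα
  have hs' : Real.sqrt α ≠ 0 := hs.ne'
  rw [gammaMeasure,
    show gammaPDF α α = fun x => ((Real.toNNReal (gammaPDFReal α α x) : ℝ≥0) : ℝ≥0∞) from rfl,
    integral_withDensity_eq_integral_smul (measurable_gammaPDFReal α α).real_toNNReal]
  have hsmul : ∀ x : ℝ, (Real.toNNReal (gammaPDFReal α α x)) • g (Real.sqrt α * Real.log x)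
      = gammaPDFReal α α x * g (Real.sqrt α * Real.log x) := by
    intro x
    rw [NNReal.smul_def, Real.coe_toNNReal _ (gammaPDFReal_nonneg hα hα x), smul_eq_mul]
  simp_rw [hsmul]
  have h0 : (∫ x, gammaPDFReal α α x * g (Real.sqrt α * Real.log x))
      = ∫ x in Set.Ioi (0:ℝ), gammaPDFReal α α x * g (Real.sqrt α * Real.log x) := by
    rw [← integral_indicator measurableSet_Ioi]
    apply integral_congr_ae
    have hne : ∀ᵐ x : ℝ, x ≠ 0 := by
      have h1 : {x : ℝ | ¬ x ≠ 0} = {0} := by ext x; simp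
      rw [ae_iff, h1]; exact Real.volume_singleton
    filter_upwards [hne] with x hx
    rcases lt_trichotomy x 0 with h|h|h
    · rw [Set.indicator_of_notMem (by simp [Set.mem_Ioi]; linarith)]
      simp [gammaPDFReal, if_neg (not_le.mpr h)]
    · exact absurd h hx
    · rw [Set.indicator_of_mem (Set.mem_Ioi.mpr h)]
  rw [h0]
  have himg : (fun y : ℝ => rexp (y / Real.sqrt α)) '' Set.univ = Set.Ioi 0 := by
    rw [Set.image_univ]
    ext z
    simp only [Set.mem_range, Set.mem_Ioi]
    constructor
    · rintro ⟨y, rfl⟩; exact Real.exp_pos _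
    · intro hz
      exact ⟨Real.sqrt α * Real.log z, by
        rw [mul_comm, mul_div_assoc, div_self hs', mul_one, Real.exp_log hz]⟩
  have hderiv : ∀ y ∈ (Set.univ : Set ℝ), HasDerivWithinAt (fun y : ℝ => rexp (y / Real.sqrt α))
      (rexp (y / Real.sqrt α) * (1 / Real.sqrt α)) Set.univ y := by
    intro y _
    exact (((hasDerivAt_id y).div_const (Real.sqrt α)).exp).hasDerivWithinAt
  have hinj : Set.InjOn (fun y : ℝ => rexp (y / Real.sqrt α)) Set.univ := by
    intro a _ b _ h
    have h2 := Real.exp_injective h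
    field_simp at h2
    exact h2
  have hcv := MeasureTheory.integral_image_eq_integral_abs_deriv_smul MeasurableSet.univ hderiv hinj
      (fun x => gammaPDFReal α α x * g (Real.sqrt α * Real.log x))
  rw [himg] at hcv
  rw [hcv, Measure.restrict_univ, ← integral_const_mul]
  apply integral_congr_ae
  filter_upwards with y
  rw [smul_eq_mul, abs_of_pos (by positivity), Real.log_exp,
    show Real.sqrt α * (y / Real.sqrt α) = y by field_simp]
  show rexp (y / Real.sqrt α) * (1 / Real.sqrt α) * (gammaPDFReal α α (rexp (y / Real.sqrt α)) * g y) = _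
  unfold gammaPDFReal
  rw [if_pos (Real.exp_pos _).le, Real.rpow_def_of_pos (Real.exp_pos _), Real.log_exp,
    show y / Real.sqrt α * (α - 1) = α * (y / Real.sqrt α) - y / Real.sqrt α by ring,
    show α * (y / Real.sqrt α) - α * rexp (y / Real.sqrt α) + α
      = (α * (y / Real.sqrt α) - y / Real.sqrt α) + (y / Real.sqrt α)
        + (-(α * rexp (y / Real.sqrt α))) + α by ring]
  simp only [Real.exp_add, Real.exp_sub, Real.exp_neg]
  have hΓ : Real.Gamma α ≠ 0 := (Real.Gamma_pos_of_pos hα).ne'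
  field_simp


lemma bound {α : ℝ} (hα : 1 ≤ α) (y : ℝ) :
    rexp (α * (y / Real.sqrt α) - α * rexp (y / Real.sqrt α) + α)
      ≤ rexp (-(y^2/4)) + rexp (-(|y|/2)) := by
  have hα0 : (0:ℝ) < α := lt_of_lt_of_le one_pos hα
  have hs1 : (1:ℝ) ≤ Real.sqrt α := by
    rw [show (1:ℝ) = Real.sqrt 1 by simp]
    exact Real.sqrt_le_sqrt hα
  have hs0 : (0:ℝ) < Real.sqrt α := lt_of_lt_of_le one_pos hs1
  set t := y / Real.sqrt α with ht
  have hy : y = Real.sqrt α * t := by rw [ht, mul_div_cancel₀ _ hs0.ne']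
  have hexp : α * t - α * rexp t + α = α * (t + 1 - rexp t) := by ring
  have hαt2 : α * t^2 = y^2 := by
    rw [ht, div_pow, Real.sq_sqrt hα0.le, mul_div_cancel₀ _ hα0.ne']
  rcases le_or_gt (-2) t with h | h
  · have h1 : (0:ℝ) ≤ 1 + t/2 := by linarith
    have h2 : 1 + t/2 ≤ rexp (t/2) := by
      have := Real.add_one_le_exp (t/2); linarith
    have h3 : (1 + t/2)^2 ≤ rexp t := by
      calc (1 + t/2)^2 ≤ rexp (t/2)^2 := by nlinarith
        _ = rexp t := by rw [sq, ← Real.exp_add]; ring_nf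
    have h4 : t + 1 - rexp t ≤ -(t^2/4) := by nlinarith
    have h5 : α * (t + 1 - rexp t) ≤ -(y^2/4) := by
      have h6 : α * (t + 1 - rexp t) ≤ α * (-(t^2/4)) :=
        mul_le_mul_of_nonneg_left h4 hα0.le
      nlinarith
    calc rexp (α * t - α * rexp t + α) ≤ rexp (-(y^2/4)) := by
          rw [hexp]; exact Real.exp_le_exp.mpr h5
      _ ≤ _ := le_add_of_nonneg_right (Real.exp_pos _).le
  · have hy0 : y < 0 := by
      rw [hy]; exact mul_neg_of_pos_of_neg hs0 (by linarith)
    have h4 : t + 1 - rexp t ≤ t/2 := by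
      have := (Real.exp_pos t).le; linarith
    have h5 : α * (t + 1 - rexp t) ≤ α * (t/2) := mul_le_mul_of_nonneg_left h4 hα0.le
    have h6 : α * (t/2) = Real.sqrt α * y / 2 := by
      rw [ht, show α * (y / Real.sqrt α / 2) = α / Real.sqrt α * y / 2 by ring, Real.div_sqrt]
    have h7 : Real.sqrt α * y ≤ y := by nlinarith
    have h8 : α * (t + 1 - rexp t) ≤ -(|y|/2) := by
      rw [abs_of_neg hy0]; linarith
    calc rexp (α * t - α * rexp t + α) ≤ rexp (-(|y|/2)) := by
          rw [hexp]; exact Real.exp_le_exp.mpr h8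
      _ ≤ _ := le_add_of_nonneg_left (Real.exp_pos _).le

lemma exc (y : ℝ) :
    Tendsto (fun α : ℝ => α * (y / Real.sqrt α) - α * rexp (y / Real.sqrt α) + α) atTop
      (nhds (-(y^2/2))) := by
  have key : ∀ᶠ α : ℝ in atTop,
      |(α * (y / Real.sqrt α) - α * rexp (y / Real.sqrt α) + α) + y^2/2|
        ≤ |y|^3 / Real.sqrt α := by
    filter_upwards [eventually_ge_atTop (max 1 (y^2))] with α hα
    have hα1 : (1:ℝ) ≤ α := le_trans (le_max_left _ _) hα
    have hα0 : (0:ℝ) < α := by linarith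
    have hs0 : (0:ℝ) < Real.sqrt α := Real.sqrt_pos.mpr hα0
    set t := y / Real.sqrt α with htdef
    have ht1 : |t| ≤ 1 := by
      rw [abs_div, abs_of_pos hs0, div_le_one hs0]
      have h2 := Real.sqrt_le_sqrt (le_trans (le_max_right 1 (y^2)) hα)
      rwa [Real.sqrt_sq_eq_abs] at h2
    have hb := Real.exp_bound ht1 (by norm_num : 0 < 3)
    have hsum : (∑ i ∈ Finset.range 3, t ^ i / (Nat.factorial i)) = 1 + t + t^2/2 := by
      simp [Finset.sum_range_succ, Nat.factorial]
    rw [hsum] at hb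
    have hαt2 : α * t^2 = y^2 := by
      rw [htdef, div_pow, Real.sq_sqrt hα0.le, mul_div_cancel₀ _ hα0.ne']
    have habs : |t| = |y| / Real.sqrt α := by rw [htdef, abs_div, abs_of_pos hs0]
    have hαt3 : α * |t|^3 = |y|^3 / Real.sqrt α := by
      rw [habs, div_pow, show (Real.sqrt α)^3 = α * Real.sqrt α by
        rw [pow_succ, Real.sq_sqrt hα0.le]]
      field_simp
    have heq : α * (y / Real.sqrt α) - α * rexp (y / Real.sqrt α) + α + y^2/2
        = -(α * (rexp t - (1 + t + t^2/2))) := by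
      rw [← hαt2, htdef]; ring
    rw [heq, abs_neg, abs_mul, abs_of_pos hα0]
    calc α * |rexp t - (1 + t + t^2/2)| ≤ α * (|t|^3 * (↑(Nat.succ 3) / (↑(Nat.factorial 3) * 3))) :=
          mul_le_mul_of_nonneg_left hb hα0.le
      _ ≤ α * |t|^3 := by
          have h9 : (↑(Nat.succ 3) : ℝ) / (↑(Nat.factorial 3) * 3) ≤ 1 := by
            norm_num [Nat.factorial]
          have h10 : |t|^3 * ((↑(Nat.succ 3) : ℝ) / (↑(Nat.factorial 3) * 3)) ≤ |t|^3 := by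
            have h11 := mul_le_mul_of_nonneg_left h9 (pow_nonneg (abs_nonneg t) 3)
            simpa using h11
          exact mul_le_mul_of_nonneg_left h10 hα0.le
      _ = |y|^3 / Real.sqrt α := hαt3
  have hlim : Tendsto (fun α : ℝ => |y|^3 / Real.sqrt α) atTop (nhds 0) := by
    have h1 : Tendsto Real.sqrt atTop atTop := by
      refine tendsto_atTop_atTop.mpr fun b => ⟨(b ⊔ 0)^2, fun a ha => ?_⟩
      have hb1 : b ⊔ 0 ≤ Real.sqrt a := by
        rw [show b ⊔ 0 = Real.sqrt ((b ⊔ 0)^2) from (Real.sqrt_sq (le_max_right _ _)).symm]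
        exact Real.sqrt_le_sqrt ha
      exact le_trans (le_max_left _ _) hb1
    have h2 := h1.inv_tendsto_atTop
    have h3 := h2.const_mul (|y|^3)
    rw [mul_zero] at h3
    simpa [div_eq_mul_inv] using h3
  have h0 : Tendsto (fun α : ℝ =>
      (α * (y / Real.sqrt α) - α * rexp (y / Real.sqrt α) + α) + y^2/2) atTop (nhds 0) :=
    squeeze_zero_norm' (by simpa [Real.norm_eq_abs] using key) hlim
  have h2 := h0.add_const (-(y^2/2))
  rw [zero_add] at h2
  convert h2 using 2 with α
  ring

lemma int_bound : Integrable (fun y : ℝ => rexp (-(y^2/4)) + rexp (-(|y|/2))) := by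
  apply Integrable.add
  · have := integrable_exp_neg_mul_sq (by norm_num : (0:ℝ) < 1/4)
    convert this using 2 with y
    congr 1; ring
  · have hIoi : IntegrableOn (fun y : ℝ => rexp (-(|y|/2))) (Set.Ioi 0) := by
      have h1 := exp_neg_integrableOn_Ioi 0 (by norm_num : (0:ℝ) < 1/2)
      apply h1.congr_fun ?_ measurableSet_Ioi
      intro x hx
      show rexp (-(1/2) * x) = rexp (-(|x|/2))
      rw [abs_of_pos hx]
      ring_nf
    have hIic : IntegrableOn (fun y : ℝ => rexp (-(|y|/2))) (Set.Iic 0) := by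
      rw [← Measure.map_neg_eq_self (volume : Measure ℝ)]
      have m : MeasurableEmbedding fun x : ℝ => -x :=
        (Homeomorph.neg ℝ).measurableEmbedding
      rw [m.integrableOn_map_iff]
      have : (fun y : ℝ => rexp (-(|y|/2))) ∘ (fun x : ℝ => -x)
          = fun y : ℝ => rexp (-(|y|/2)) := by
        funext x; simp
      rw [this, show (fun x : ℝ => -x) ⁻¹' Set.Iic 0 = Set.Ici 0 by
        ext x; simp]
      exact Iff.mpr integrableOn_Ici_iff_integrableOn_Ioi hIoi
    have := hIic.union hIoi
    rwa [Set.Iic_union_Ioi, integrableOn_univ] at this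




lemma tendstoJ (g : ℝ → ℝ) (hg : Continuous g) (C : ℝ) (hC : ∀ y, |g y| ≤ C) :
    Tendsto (fun α : ℝ =>
        ∫ y, rexp (α * (y / Real.sqrt α) - α * rexp (y / Real.sqrt α) + α) * g y)
      atTop (nhds (∫ y, rexp (-(y^2/2)) * g y)) := by
  apply MeasureTheory.tendsto_integral_filter_of_dominated_convergence
    (bound := fun y => (rexp (-(y^2/4)) + rexp (-(|y|/2))) * C)
  · filter_upwards with α
    have hc : Continuous fun y : ℝ =>
        rexp (α * (y / Real.sqrt α) - α * rexp (y / Real.sqrt α) + α) := by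
      apply Real.continuous_exp.comp
      fun_prop
    exact (hc.mul hg).aestronglyMeasurable
  · filter_upwards [eventually_ge_atTop (1:ℝ)] with α hα
    refine ae_of_all _ fun y => ?_
    rw [Real.norm_eq_abs, abs_mul, abs_of_pos (Real.exp_pos _)]
    have h1 : (0:ℝ) ≤ rexp (-(y^2/4)) + rexp (-(|y|/2)) := by positivity
    exact mul_le_mul (bound hα y) (hC y) (abs_nonneg _) h1
  · exact int_bound.mul_const C
  · refine ae_of_all _ fun y => ?_
    exact ((Real.continuous_exp.tendsto _).comp (exc y)).mul_const (g y)

lemma gauss_int (g : ℝ → ℝ) :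
    ∫ x, g x ∂(gaussianReal 0 1)
      = (Real.sqrt (2*π))⁻¹ * ∫ y, rexp (-(y^2/2)) * g y := by
  rw [gaussianReal_of_var_ne_zero 0 one_ne_zero,
    show gaussianPDF 0 1 = fun x => ((Real.toNNReal (gaussianPDFReal 0 1 x) : ℝ≥0) : ℝ≥0∞) from rfl,
    integral_withDensity_eq_integral_smul (measurable_gaussianPDFReal 0 1).real_toNNReal,
    ← integral_const_mul]
  apply integral_congr_ae
  filter_upwards with x
  rw [NNReal.smul_def, Real.coe_toNNReal _ (gaussianPDFReal_nonneg 0 1 x), smul_eq_mul]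
  unfold gaussianPDFReal
  push_cast
  rw [show -(x - 0)^2/(2*(1:ℝ)) = -(x^2/2) by ring]
  rw [mul_one]
  ring

lemma gauss_norm : (∫ y : ℝ, rexp (-(y^2/2))) = Real.sqrt (2*π) := by
  have h := integral_gaussian (1/2 : ℝ)
  rw [show π / (1/2 : ℝ) = 2*π by ring] at h
  rw [show (fun y : ℝ => rexp (-(y^2/2))) = fun y : ℝ => rexp (-(1/2 : ℝ) * y^2) by
    funext y; ring_nf]
  exact h

end LogGammaAux

open LogGammaAux in
/-- If G_α ~ Gamma(α, 1/α) (shape α, rate α), then √α·log(G_α) converges in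
distribution to N(0,1) as α → ∞: integrals of bounded continuous functions
converge. -/
theorem loggamma_normal_approximation :
    ∀ f : BoundedContinuousFunction ℝ ℝ,
      Tendsto (fun α : ℝ =>
          ∫ x, f (Real.sqrt α * Real.log x) ∂(gammaMeasure α α)) atTop
        (nhds (∫ x, f x ∂(gaussianReal 0 1))) := by
  intro f
  have hπ : (0:ℝ) < Real.sqrt (2*π) := Real.sqrt_pos.mpr (by positivity)
  have hJf := tendstoJ f f.continuous ‖f‖ (fun y => by
    simpa [Real.norm_eq_abs] using f.norm_coe_le_norm y)
  have hJ1 := tendstoJ (fun _ => 1) continuous_const 1 (fun y => by norm_num)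
  simp only [mul_one] at hJ1
  have hL : (∫ y : ℝ, rexp (-(y^2/2))) = Real.sqrt (2*π) := gauss_norm
  rw [hL] at hJ1
  have hA : Tendsto (fun α : ℝ => α ^ α * rexp (-α) / (Real.Gamma α * Real.sqrt α)) atTop
      (nhds (Real.sqrt (2*π))⁻¹) := by
    have h1 : ∀ᶠ α : ℝ in atTop, (fun α : ℝ =>
        (∫ y, rexp (α * (y / Real.sqrt α) - α * rexp (y / Real.sqrt α) + α))⁻¹) α
        = α ^ α * rexp (-α) / (Real.Gamma α * Real.sqrt α) := by
      filter_upwards [eventually_gt_atTop (0:ℝ)] with α hα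
      have : IsProbabilityMeasure (gammaMeasure α α) := isProbabilityMeasure_gammaMeasure hα hα
      have hone : (1:ℝ) = ∫ x, (fun _ : ℝ => (1:ℝ)) (Real.sqrt α * Real.log x)
          ∂(gammaMeasure α α) := by simp
      rw [cov hα (fun _ => 1)] at hone
      simp only [mul_one] at hone
      exact (eq_inv_of_mul_eq_one_left hone.symm).symm
    exact Tendsto.congr' h1 (hJ1.inv₀ hπ.ne')
  have hmain := hA.mul hJf
  have hval : (Real.sqrt (2*π))⁻¹ * ∫ y, rexp (-(y^2/2)) * f y
      = ∫ x, f x ∂(gaussianReal 0 1) := (gauss_int f).symm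
  rw [← hval]
  refine Tendsto.congr' ?_ hmain
  filter_upwards [eventually_gt_atTop (0:ℝ)] with α hα
  exact (cov hα f).symm
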